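/- Let (Ω, F, μ) be a charge space and f, g simple integrable functions with |f| ≤ M, |g| ≤ M, and μ_f(δ) ≤ C, μ_g(δ) ≤ C for some δ ≥ 0, C > 0, M > 0. Then for any 0 < r < ∞ and ε > 0, if additionally ∫_{{|f|>δ}∪{|g|>δ}} ||f|−|g|| dμ ≤ ε, then ∫_δ^∞ |μ_f(t)^r − μ_g(t)^r| dt ≤ C^r · λ({t ∈ (δ, M] : |μ_f(t) − μ_g(t)| > α}) + ε' · M for appropriate α, ε' depending on ε, where λ({t > δ : |μ_f(t) − μ_g(t)| > α}) ≤ ε/α by Chebyshev. In particular, as ε → 0 the quantity ∫_δ^∞ |μ_f(t)^r − μ_g(t)^r| dt → 0 uniformly over such pairs (f,g). -/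

import Mathlib

open Set ENNReal MeasureTheory

def IsSetField {Ω : Type*} (𝓕 : Set (Set Ω)) : Prop :=
  Set.univ ∈ 𝓕 ∧ (∀ A B : Set Ω, A ∈ 𝓕 → B ∈ 𝓕 → A ∪ B ∈ 𝓕) ∧
    (∀ A B : Set Ω, A ∈ 𝓕 → B ∈ 𝓕 → A \ B ∈ 𝓕)

def IsCharge {Ω : Type*} (𝓕 : Set (Set Ω)) (μ : Set Ω → ℝ≥0∞) : Prop :=
  μ ∅ = 0 ∧ ∀ A B : Set Ω, A ∈ 𝓕 → B ∈ 𝓕 → Disjoint A B → μ (A ∪ B) = μ A + μ B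

noncomputable def outerCharge {Ω : Type*} (𝓕 : Set (Set Ω)) (μ : Set Ω → ℝ≥0∞)
    (E : Set Ω) : ℝ≥0∞ :=
  ⨅ (F : Set Ω) (_ : F ∈ 𝓕) (_ : E ⊆ F), μ F

/-- `f` is a simple integrable function: finitely many values, each nonzero value
taken on a set of the field of finite charge. -/
def IsSimpleInt {Ω : Type*} (𝓕 : Set (Set Ω)) (μ : Set Ω → ℝ≥0∞) (f : Ω → ℝ) : Prop :=
  (Set.range f).Finite ∧ ∀ c : ℝ, c ≠ 0 → {ω | f ω = c} ∈ 𝓕 ∧ μ {ω | f ω = c} ≠ ∞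

/-- The charge integral of a nonnegative simple function,
`∫ f dμ = ∑_c c · μ({f = c})`. -/
noncomputable def chargeIntegral {Ω : Type*} (μ : Set Ω → ℝ≥0∞) (f : Ω → ℝ) : ℝ≥0∞ :=
  ∑' c : ℝ, ENNReal.ofReal c * μ {ω | f ω = c}

/-- The absolute difference in `ℝ≥0∞`. -/
noncomputable def absd (a b : ℝ≥0∞) : ℝ≥0∞ := (a - b) ⊔ (b - a)
/-!
Partition `Ω` into the finitely many cells on which `(f, g)` is constant. Each distribution
function becomes a finite sum of indicators of half-lines `t < |f|` weighted by the charges of the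
cells, so `|μ_f(t) - μ_g(t)|` is at most the total charge of the cells with `t` between `|f|` and
`|g|`; integrating over `t > δ` gives `∫_δ^∞ |μ_f - μ_g| ≤ ∫_{|f|>δ ∨ |g|>δ} ||f| - |g|| dμ`.
By Chebyshev, `|μ_f - μ_g| ≥ α` only on a set of length `≤ ε / α`, where `|μ_f^r - μ_g^r| ≤ C^r`;
elsewhere on `(δ, M]` uniform continuity of `x ↦ x^r` on `[0, C]` makes it small, and beyond `M`
both distribution functions vanish.
-/

namespace IsSetField

variable {Ω : Type*} {𝓕 : Set (Set Ω)}

lemma empty_mem (hF : IsSetField 𝓕) : ∅ ∈ 𝓕 := by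
  simpa using hF.2.2 _ _ hF.1 hF.1

lemma inter_mem (hF : IsSetField 𝓕) {A B : Set Ω} (hA : A ∈ 𝓕) (hB : B ∈ 𝓕) :
    A ∩ B ∈ 𝓕 := by
  simpa [Set.sdiff_sdiff_right_self] using hF.2.2 _ _ hA (hF.2.2 _ _ hA hB)

lemma biUnion_mem (hF : IsSetField 𝓕) {ι : Type*} (s : Finset ι) {A : ι → Set Ω}
    (hA : ∀ i ∈ s, A i ∈ 𝓕) : (⋃ i ∈ s, A i) ∈ 𝓕 := by
  classical
  induction s using Finset.induction_on with
  | empty => simpa using hF.empty_mem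
  | insert a s _ ih =>
    rw [Finset.set_biUnion_insert]
    exact hF.2.1 _ _ (hA a (s.mem_insert_self a)) (ih fun i hi => hA i (s.mem_insert_of_mem hi))

end IsSetField

namespace IsCharge

variable {Ω : Type*} {𝓕 : Set (Set Ω)} {μ : Set Ω → ℝ≥0∞}

lemma mono (hμ : IsCharge 𝓕 μ) (hF : IsSetField 𝓕) {A B : Set Ω} (hA : A ∈ 𝓕) (hB : B ∈ 𝓕)
    (hAB : A ⊆ B) : μ A ≤ μ B := by
  rw [← Set.union_sdiff_cancel hAB, hμ.2 A (B \ A) hA (hF.2.2 _ _ hB hA) disjoint_sdiff_right]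
  exact le_self_add

lemma biUnion_finset (hμ : IsCharge 𝓕 μ) (hF : IsSetField 𝓕) {ι : Type*} (s : Finset ι)
    {A : ι → Set Ω} (hA : ∀ i ∈ s, A i ∈ 𝓕) (hd : (s : Set ι).PairwiseDisjoint A) :
    μ (⋃ i ∈ s, A i) = ∑ i ∈ s, μ (A i) := by
  classical
  induction s using Finset.induction_on with
  | empty => simpa using hμ.1
  | insert a s ha ih =>
    rw [Finset.coe_insert, Set.pairwiseDisjoint_insert] at hd
    have hA' : ∀ i ∈ s, A i ∈ 𝓕 := fun i hi => hA i (s.mem_insert_of_mem hi)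
    rw [Finset.set_biUnion_insert, Finset.sum_insert ha, ← ih hA' hd.1,
      hμ.2 _ _ (hA a (s.mem_insert_self a)) (hF.biUnion_mem s hA')
        (Set.disjoint_iUnion₂_right.2 fun i hi => hd.2 i hi fun h => ha (h ▸ hi))]

end IsCharge

section OuterCharge

variable {Ω : Type*} {𝓕 : Set (Set Ω)} {μ : Set Ω → ℝ≥0∞}

lemma outerCharge_mono {E E' : Set Ω} (h : E ⊆ E') :
    outerCharge 𝓕 μ E ≤ outerCharge 𝓕 μ E' :=
  le_iInf₂ fun F hF => le_iInf fun hE'F => iInf₂_le_of_le F hF (iInf_le_of_le (h.trans hE'F) le_rfl)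

lemma outerCharge_of_mem (hF : IsSetField 𝓕) (hμ : IsCharge 𝓕 μ) {A : Set Ω} (hA : A ∈ 𝓕) :
    outerCharge 𝓕 μ A = μ A :=
  le_antisymm (iInf₂_le_of_le A hA (iInf_le_of_le subset_rfl le_rfl))
    (le_iInf₂ fun _ hF' => le_iInf fun hAF => hμ.mono hF hA hF' hAF)

lemma outerCharge_empty (hF : IsSetField 𝓕) (hμ : IsCharge 𝓕 μ) :
    outerCharge 𝓕 μ (∅ : Set Ω) = 0 := by
  rw [outerCharge_of_mem hF hμ hF.empty_mem, hμ.1]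

lemma antitone_outerCharge_lt_abs (f : Ω → ℝ) :
    Antitone fun t => outerCharge 𝓕 μ {ω | t < |f ω|} :=
  fun _ _ hst => outerCharge_mono fun _ hω => hst.trans_lt hω

lemma outerCharge_lt_abs_eq_zero (hF : IsSetField 𝓕) (hμ : IsCharge 𝓕 μ) {f : Ω → ℝ} {M t : ℝ}
    (hfM : ∀ ω, |f ω| ≤ M) (ht : M < t) : outerCharge 𝓕 μ {ω | t < |f ω|} = 0 := by
  have hempty : {ω | t < |f ω|} = ∅ :=
    Set.eq_empty_of_forall_notMem fun ω hω => (hfM ω).not_gt (ht.trans hω)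
  rw [hempty, outerCharge_empty hF hμ]

end OuterCharge

lemma IsSimpleInt.setOf_eq_mem {Ω : Type*} {𝓕 : Set (Set Ω)} {μ : Set Ω → ℝ≥0∞} {f : Ω → ℝ}
    (hF : IsSetField 𝓕) (hf : IsSimpleInt 𝓕 μ f) (a : ℝ) : {ω | f ω = a} ∈ 𝓕 := by
  classical
  rcases ne_or_eq a 0 with ha | rfl
  · exact (hf.2 a ha).1
  have h : {ω | f ω = 0} = Set.univ \ ⋃ c ∈ hf.1.toFinset.erase 0, {ω | f ω = c} := by
    ext ω
    simp
  rw [h]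
  exact hF.2.2 _ _ hF.1 (hF.biUnion_mem _ fun c hc => (hf.2 c (Finset.ne_of_mem_erase hc)).1)

section Partition

variable {Ω ι : Type*} {𝓕 : Set (Set Ω)} {μ : Set Ω → ℝ≥0∞} {P : Finset ι} {key : Ω → ι}

lemma preimage_eq_biUnion_fiber (hkey : ∀ ω, key ω ∈ P) (S : Set ι) [DecidablePred (· ∈ S)] :
    key ⁻¹' S = ⋃ q ∈ P.filter (· ∈ S), key ⁻¹' {q} := by
  ext ω
  simp [hkey ω]

lemma IsCharge.preimage_eq_sum (hμ : IsCharge 𝓕 μ) (hF : IsSetField 𝓕) (hkey : ∀ ω, key ω ∈ P)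
    (hfib : ∀ q, key ⁻¹' {q} ∈ 𝓕) (S : Set ι) [DecidablePred (· ∈ S)] :
    μ (key ⁻¹' S) = ∑ q ∈ P with q ∈ S, μ (key ⁻¹' {q}) := by
  rw [preimage_eq_biUnion_fiber hkey,
    hμ.biUnion_finset hF _ (fun q _ => hfib q) (Set.pairwiseDisjoint_fiber key _)]

lemma IsSetField.preimage_mem (hF : IsSetField 𝓕) (hkey : ∀ ω, key ω ∈ P)
    (hfib : ∀ q, key ⁻¹' {q} ∈ 𝓕) (S : Set ι) : key ⁻¹' S ∈ 𝓕 := by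
  classical
  rw [preimage_eq_biUnion_fiber hkey]
  exact hF.biUnion_mem _ fun q _ => hfib q

lemma sum_le_chargeIntegral_comp (hF : IsSetField 𝓕) (hμ : IsCharge 𝓕 μ) (hkey : ∀ ω, key ω ∈ P)
    (hfib : ∀ q, key ⁻¹' {q} ∈ 𝓕) (φ : ι → ℝ) :
    ∑ q ∈ P, ENNReal.ofReal (φ q) * μ (key ⁻¹' {q}) ≤ chargeIntegral μ (φ ∘ key) := by
  classical
  calc ∑ q ∈ P, ENNReal.ofReal (φ q) * μ (key ⁻¹' {q})
      = ∑ c ∈ P.image φ, ENNReal.ofReal c * μ (key ⁻¹' {q | φ q = c}) := by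
        rw [← Finset.sum_fiberwise_of_maps_to fun q hq => Finset.mem_image_of_mem φ hq]
        refine Finset.sum_congr rfl fun c _ => ?_
        rw [hμ.preimage_eq_sum hF hkey hfib, Finset.mul_sum]
        exact Finset.sum_congr rfl fun q hq => by rw [(Finset.mem_filter.1 hq).2]
    _ ≤ chargeIntegral μ (φ ∘ key) := ENNReal.sum_le_tsum _

end Partition

section Absd

variable {a b c d : ℝ≥0∞}

lemma absd_self (a : ℝ≥0∞) : absd a a = 0 := by
  simp [absd]

lemma absd_le (ha : a ≤ c) (hb : b ≤ c) : absd a b ≤ c :=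
  sup_le (tsub_le_self.trans ha) (tsub_le_self.trans hb)

-- No finiteness is needed: truncated subtraction gives `∞ - ∞ = 0`.
lemma absd_add_add_le : absd (a + b) (c + d) ≤ absd a c + absd b d :=
  sup_le (add_tsub_add_le_tsub_add_tsub.trans (add_le_add le_sup_left le_sup_left))
    (add_tsub_add_le_tsub_add_tsub.trans (add_le_add le_sup_right le_sup_right))

lemma absd_sum_le {ι : Type*} (s : Finset ι) (u v : ι → ℝ≥0∞) :
    absd (∑ i ∈ s, u i) (∑ i ∈ s, v i) ≤ ∑ i ∈ s, absd (u i) (v i) := by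
  classical
  induction s using Finset.induction_on with
  | empty => simp [absd_self]
  | insert i s hi ih =>
    simp only [Finset.sum_insert hi]
    exact absd_add_add_le.trans (add_le_add le_rfl ih)

lemma absd_ofReal {x y : ℝ} (hx : 0 ≤ x) (hy : 0 ≤ y) :
    absd (ENNReal.ofReal x) (ENNReal.ofReal y) = ENNReal.ofReal |x - y| := by
  rw [absd, ← ENNReal.ofReal_sub x hy, ← ENNReal.ofReal_sub y hx, ← ENNReal.ofReal_max,
    abs_eq_max_neg, neg_sub]

lemma absd_indicator_Iio_le (x y t : ℝ) (c : ℝ≥0∞) :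
    absd ((Iio x).indicator (fun _ => c) t) ((Iio y).indicator (fun _ => c) t)
      ≤ (Ico (min x y) (max x y)).indicator (fun _ => c) t := by
  by_cases hx : t < x <;> by_cases hy : t < y <;>
    simp [absd, hx, hy, le_of_not_gt]

end Absd

lemma volume_Ico_min_max_inter_Ioi_le (a b δ : ℝ) :
    volume (Ico (min a b) (max a b) ∩ Ioi δ)
      ≤ ENNReal.ofReal (if δ < a ∨ δ < b then |a - b| else 0) := by
  split_ifs with h
  · calc volume (Ico (min a b) (max a b) ∩ Ioi δ) ≤ volume (Ico (min a b) (max a b)) :=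
          measure_mono Set.inter_subset_left
      _ = ENNReal.ofReal |a - b| := by rw [Real.volume_Ico, max_sub_min_eq_abs']
  · push Not at h
    have : Ico (min a b) (max a b) ∩ Ioi δ = ∅ :=
      Set.eq_empty_of_forall_notMem fun t ht => (ht.1.2.trans_le (max_le h.1 h.2)).not_gt ht.2
    simp [this]

theorem lintegral_absd_distribution_le {Ω : Type*} {𝓕 : Set (Set Ω)} {μ : Set Ω → ℝ≥0∞}
    (hF : IsSetField 𝓕) (hμ : IsCharge 𝓕 μ) {f g : Ω → ℝ} (hf : IsSimpleInt 𝓕 μ f)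
    (hg : IsSimpleInt 𝓕 μ g) (δ : ℝ) :
    ∫⁻ t in Ioi δ, absd (outerCharge 𝓕 μ {ω | t < |f ω|}) (outerCharge 𝓕 μ {ω | t < |g ω|})
      ≤ chargeIntegral μ
          (indicator ({ω | δ < |f ω|} ∪ {ω | δ < |g ω|}) (fun ω => |(|f ω| - |g ω|)|)) := by
  classical
  set key : Ω → ℝ × ℝ := fun ω => (f ω, g ω)
  set P := hf.1.toFinset ×ˢ hg.1.toFinset
  have hkey : ∀ ω, key ω ∈ P := fun ω => by simp [P, key]
  have hfib : ∀ q, key ⁻¹' {q} ∈ 𝓕 := fun q => by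
    have : key ⁻¹' {q} = {ω | f ω = q.1} ∩ {ω | g ω = q.2} := by ext; simp [key, Prod.ext_iff]
    rw [this]
    exact hF.inter_mem (hf.setOf_eq_mem hF _) (hg.setOf_eq_mem hF _)
  set w : ℝ × ℝ → ℝ≥0∞ := fun q => μ (key ⁻¹' {q})
  have hdist : ∀ (p : ℝ × ℝ → ℝ) (t : ℝ),
      outerCharge 𝓕 μ (key ⁻¹' {q | t < |p q|})
        = ∑ q ∈ P, (Iio |p q|).indicator (fun _ => w q) t := by
    intro p t
    rw [outerCharge_of_mem hF hμ (hF.preimage_mem hkey hfib _), hμ.preimage_eq_sum hF hkey hfib,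
      Finset.sum_filter]
    simp [Set.indicator_apply, w]
  calc ∫⁻ t in Ioi δ, absd (outerCharge 𝓕 μ {ω | t < |f ω|}) (outerCharge 𝓕 μ {ω | t < |g ω|})
      ≤ ∫⁻ t in Ioi δ,
          ∑ q ∈ P, (Ico (min |q.1| |q.2|) (max |q.1| |q.2|)).indicator (fun _ => w q) t := by
        refine lintegral_mono fun t => ?_
        have h := absd_sum_le P (fun q => (Iio |q.1|).indicator (fun _ => w q) t)
          (fun q => (Iio |q.2|).indicator (fun _ => w q) t)
        rw [← hdist, ← hdist] at h
        exact h.trans (Finset.sum_le_sum fun q _ => absd_indicator_Iio_le _ _ _ _)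
    _ = ∑ q ∈ P, w q * volume (Ico (min |q.1| |q.2|) (max |q.1| |q.2|) ∩ Ioi δ) := by
        rw [lintegral_finsetSum _ fun q _ => measurable_const.indicator measurableSet_Ico]
        refine Finset.sum_congr rfl fun q _ => ?_
        rw [lintegral_indicator_const measurableSet_Ico, Measure.restrict_apply measurableSet_Ico]
    _ ≤ ∑ q ∈ P, ENNReal.ofReal
          (({q | δ < |q.1|} ∪ {q | δ < |q.2|}).indicator (fun q => |(|q.1| - |q.2|)|) q) * w q := by
        refine Finset.sum_le_sum fun q _ => ?_
        rw [mul_comm, Set.indicator_apply]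
        simp only [Set.mem_union, Set.mem_ofPred_eq]
        gcongr
        exact volume_Ico_min_max_inter_Ioi_le _ _ _
    _ ≤ _ := sum_le_chargeIntegral_comp hF hμ hkey hfib _

lemma exists_absd_rpow_lt {r C ε : ℝ} (hr : 0 < r) (hC : 0 ≤ C) (hε : 0 < ε) :
    ∃ α > 0, ∀ a b : ℝ≥0∞, a ≤ ENNReal.ofReal C → b ≤ ENNReal.ofReal C →
      absd a b < ENNReal.ofReal α → absd (a ^ r) (b ^ r) < ENNReal.ofReal ε := by
  have hcont : ContinuousOn (fun x : ℝ => x ^ r) (Icc 0 C) := fun x _ =>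
    (Real.continuousAt_rpow_const x r (Or.inr hr.le)).continuousWithinAt
  obtain ⟨α, hα, hunif⟩ := Metric.uniformContinuousOn_iff.1
    (isCompact_Icc.uniformContinuousOn_of_continuous hcont) ε hε
  refine ⟨α, hα, fun a b ha hb hab => ?_⟩
  have hIcc : ∀ x ≤ ENNReal.ofReal C, x.toReal ∈ Icc 0 C := fun x hx =>
    ⟨toReal_nonneg, toReal_le_of_le_ofReal hC hx⟩
  rw [← ofReal_toReal (ne_top_of_le_ne_top ofReal_ne_top ha),
    ← ofReal_toReal (ne_top_of_le_ne_top ofReal_ne_top hb)] at hab ⊢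
  rw [absd_ofReal toReal_nonneg toReal_nonneg, ofReal_lt_ofReal_iff hα] at hab
  rw [ofReal_rpow_of_nonneg toReal_nonneg hr.le, ofReal_rpow_of_nonneg toReal_nonneg hr.le,
    absd_ofReal (by positivity) (by positivity), ofReal_lt_ofReal_iff hε]
  exact hunif _ (hIcc a ha) _ (hIcc b hb) hab

theorem lintegral_absd_rpow_le {u v : ℝ → ℝ≥0∞} (hu : Measurable u) (hv : Measurable v)
    {r C M δ α ε : ℝ} (hr : 0 < r) (hC : 0 ≤ C) (hα : 0 < α)
    (huC : ∀ t > δ, u t ≤ ENNReal.ofReal C) (hvC : ∀ t > δ, v t ≤ ENNReal.ofReal C)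
    (hu0 : ∀ t > M, u t = 0) (hv0 : ∀ t > M, v t = 0)
    (hunif : ∀ a b : ℝ≥0∞, a ≤ ENNReal.ofReal C → b ≤ ENNReal.ofReal C →
      absd a b < ENNReal.ofReal α → absd (a ^ r) (b ^ r) < ENNReal.ofReal ε) :
    ∫⁻ t in Ioi δ, absd (u t ^ r) (v t ^ r)
      ≤ ENNReal.ofReal (C ^ r) * ((∫⁻ t in Ioi δ, absd (u t) (v t)) / ENNReal.ofReal α)
        + ENNReal.ofReal ε * ENNReal.ofReal (M - δ) := by
  set S := {t | ENNReal.ofReal α ≤ absd (u t) (v t)}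
  have hS : MeasurableSet S := measurableSet_le measurable_const ((hu.sub hv).sup (hv.sub hu))
  have hchebyshev : volume.restrict (Ioi δ) S
      ≤ (∫⁻ t in Ioi δ, absd (u t) (v t)) / ENNReal.ofReal α :=
    meas_ge_le_lintegral_div ((hu.sub hv).sup (hv.sub hu)).aemeasurable
      (ofReal_pos.2 hα).ne' ofReal_ne_top
  have hrpow_le : ∀ x ≤ ENNReal.ofReal C, x ^ r ≤ ENNReal.ofReal (C ^ r) := fun x hx => by
    rw [← ofReal_rpow_of_nonneg hC hr.le]
    exact rpow_le_rpow hx hr.le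
  have hpointwise : ∀ t ∈ Ioi δ, absd (u t ^ r) (v t ^ r)
      ≤ S.indicator (fun _ => ENNReal.ofReal (C ^ r)) t
        + (Iic M).indicator (fun _ => ENNReal.ofReal ε) t := by
    intro t ht
    rcases le_or_gt t M with htM | htM
    · by_cases htS : t ∈ S
      · rw [indicator_of_mem htS]
        exact le_add_right (absd_le (hrpow_le _ (huC t ht)) (hrpow_le _ (hvC t ht)))
      · rw [indicator_of_notMem htS, indicator_of_mem (Set.mem_Iic.2 htM), zero_add]
        exact (hunif _ _ (huC t ht) (hvC t ht) (not_le.1 htS)).le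
    · rw [hu0 t htM, hv0 t htM, absd_self]
      exact zero_le
  calc ∫⁻ t in Ioi δ, absd (u t ^ r) (v t ^ r)
      ≤ ∫⁻ t in Ioi δ, (S.indicator (fun _ => ENNReal.ofReal (C ^ r)) t
          + (Iic M).indicator (fun _ => ENNReal.ofReal ε) t) :=
        setLIntegral_mono' measurableSet_Ioi hpointwise
    _ = ENNReal.ofReal (C ^ r) * volume.restrict (Ioi δ) S
          + ENNReal.ofReal ε * volume (Ioc δ M) := by
        rw [lintegral_add_left (measurable_const.indicator hS), lintegral_indicator_const hS,
          lintegral_indicator_const measurableSet_Iic, Measure.restrict_apply measurableSet_Iic,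
          Set.Iic_inter_Ioi]
    _ ≤ _ := by
        rw [Real.volume_Ioc]
        gcongr

/-- Uniform vanishing: `∫_δ^∞ |μ_f(t)^r − μ_g(t)^r| dt → 0` uniformly over pairs of simple
integrable functions bounded by `M`, with `μ_f(δ), μ_g(δ) ≤ C`, as
`∫_{{|f|>δ}∪{|g|>δ}} ||f|−|g|| dμ → 0`. -/
theorem lintegral_rpow_distribution_uniform_small {Ω : Type*} (𝓕 : Set (Set Ω))
    (μ : Set Ω → ℝ≥0∞) (hF : IsSetField 𝓕) (hμ : IsCharge 𝓕 μ)
    (r M C δ : ℝ) (hr : 0 < r) (hM : 0 < M) (hC : 0 < C) (hδ : 0 ≤ δ) :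
    ∀ ε' : ℝ, 0 < ε' → ∃ ε : ℝ, 0 < ε ∧
      ∀ f g : Ω → ℝ, IsSimpleInt 𝓕 μ f → IsSimpleInt 𝓕 μ g →
        (∀ ω, |f ω| ≤ M) → (∀ ω, |g ω| ≤ M) →
        outerCharge 𝓕 μ {ω | δ < |f ω|} ≤ ENNReal.ofReal C →
        outerCharge 𝓕 μ {ω | δ < |g ω|} ≤ ENNReal.ofReal C →
        chargeIntegral μ
            (Set.indicator ({ω | δ < |f ω|} ∪ {ω | δ < |g ω|})
              (fun ω => |(|f ω| - |g ω|)|)) ≤ ENNReal.ofReal ε →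
        ∫⁻ t in Set.Ioi δ,
            absd ((outerCharge 𝓕 μ {ω | t < |f ω|}) ^ r)
                 ((outerCharge 𝓕 μ {ω | t < |g ω|}) ^ r)
          ≤ ENNReal.ofReal ε' := by
  intro ε' hε'
  obtain ⟨α, hα, hunif⟩ := exists_absd_rpow_lt (C := C) hr hC.le (by positivity : 0 < ε' / (2 * M))
  have hCr : 0 < C ^ r := Real.rpow_pos_of_pos hC r
  -- Chosen so that the Chebyshev term `C^r · ε / α` is `ε' / 2`.
  refine ⟨ε' * α / (2 * C ^ r), by positivity, fun f g hf hg hfM hgM hfC hgC hint => ?_⟩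
  refine (lintegral_absd_rpow_le (antitone_outerCharge_lt_abs f).measurable
    (antitone_outerCharge_lt_abs g).measurable hr hC.le hα
    (fun t ht => (antitone_outerCharge_lt_abs f ht.le).trans hfC)
    (fun t ht => (antitone_outerCharge_lt_abs g ht.le).trans hgC)
    (fun _ => outerCharge_lt_abs_eq_zero hF hμ hfM) (fun _ => outerCharge_lt_abs_eq_zero hF hμ hgM)
    hunif).trans ?_
  calc _ ≤ ENNReal.ofReal (C ^ r) * (ENNReal.ofReal (ε' * α / (2 * C ^ r)) / ENNReal.ofReal α)
        + ENNReal.ofReal (ε' / (2 * M)) * ENNReal.ofReal M := by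
        gcongr
        · exact (lintegral_absd_distribution_le hF hμ hf hg δ).trans hint
        · linarith
    _ = ENNReal.ofReal ε' := by
        rw [← ofReal_div_of_pos hα, ← ofReal_mul hCr.le, ← ofReal_mul (by positivity),
          ← ofReal_add (by positivity) (by positivity)]
        congr 1
        field_simp
        ring
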